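/- arXiv:2105.01916 — 3 statements merged into one kernel-verified Lean document; each statement's English description precedes it below -/
import Mathlib

section
/- For each r_0, ℓ ∈ ℕ with ℓ ≥ 1 and each real ε > 0, there exists a positive integer n such that every ℓ-periodic string s_1,…,s_n of length n (over any finite alphabet) contains a contiguous substring s := s_{i+1},…,s_{i+2r} of even length 2r with r ≥ r_0 such that τ(s) ≤ ε·r. -/
/-- A string is `ℓ`-periodic if every contiguous length-`ℓ` substring contains every
character occurring in the string. -/
def LPeriodic {α : Type*} (ℓ : ℕ) (s : List α) : Prop :=
  ∀ i, i + ℓ ≤ s.length → ∀ a ∈ s, a ∈ (s.drop i).take ℓ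

/-- `tau r l`: for a string `l` of length `2r`, the sum over all characters `a` of
`|hist_a(first half) - hist_a(second half)|`. -/
noncomputable def tau {α : Type*} (r : ℕ) (l : List α) : ℕ :=
  letI := Classical.decEq α
  (l.dedup.map (fun a =>
    (((l.take r).count a : ℤ) - ((l.drop r).count a : ℤ)).natAbs)).sum

/-!
Energy increment. Over a set `A` of at most `k` letters put `E(w) = ∑ₐ hist_a(w)²`. Splitting
`w = uv` into halves, the parallelogram law gives
`E(w) = 2E(u) + 2E(v) - ∑ₐ (hist_a u - hist_a v)²`, and by Cauchy–Schwarz the subtracted sum is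
at least `τ(w)² / k`. If every window of length `2m` with `m ≥ r` has `τ > εm`, halving a string
of length `2ᵗr` down to blocks of length `r` yields `k E ≤ (2ᵗr)² (k - tε²/4)`, which is negative
once `t > 4k/ε²`. An `ℓ`-periodic string has at most `ℓ` distinct letters, so `k = ℓ` works.
-/

open Finset

section

variable {α : Type*}

theorem tau_eq_sum_abs_sub [DecidableEq α] {A : Finset α} {l : List α} (hA : l.toFinset ⊆ A)
    (r : ℕ) : (tau r l : ℝ) =
      ∑ a ∈ A, |((l.take r).count a : ℝ) - ((l.drop r).count a : ℝ)| := by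
  have hvanish : ∀ a ∈ A, a ∉ l.toFinset →
      |((l.take r).count a : ℝ) - ((l.drop r).count a : ℝ)| = 0 := fun a _ ha => by
    have ha : a ∉ l := by simpa using ha
    simp [List.count_eq_zero.2 (mt List.mem_of_mem_take ha),
      List.count_eq_zero.2 (mt List.mem_of_mem_drop ha)]
  have hdedup : l.dedup.toFinset = l.toFinset := by ext; simp
  rw [← sum_subset hA hvanish, ← hdedup, List.sum_toFinset _ l.nodup_dedup, tau,
    Subsingleton.elim (Classical.decEq α) ‹_›, Nat.cast_list_sum, List.map_map]
  congr 2 with a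
  simp [Nat.cast_natAbs]

theorem List.IsInfix.exists_eq_take_drop {w s : List α} (h : w <:+: s) :
    ∃ i, i + w.length ≤ s.length ∧ (s.drop i).take w.length = w := by
  obtain ⟨p, q, rfl⟩ := h
  exact ⟨p.length, by simp, by simp⟩

theorem LPeriodic.card_toFinset_le [DecidableEq α] {ℓ : ℕ} {s : List α} (h : LPeriodic ℓ s)
    (hℓ : ℓ ≤ s.length) : s.toFinset.card ≤ ℓ :=
  calc s.toFinset.card ≤ (s.take ℓ).toFinset.card :=
        card_le_card fun a ha => by simpa using h 0 (by omega) a (by simpa using ha)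
    _ ≤ (s.take ℓ).length := List.toFinset_card_le _
    _ ≤ ℓ := List.length_take_le _ _

section Energy

variable [DecidableEq α] (A : Finset α)

noncomputable def energy (l : List α) : ℝ :=
  ∑ a ∈ A, (l.count a : ℝ) ^ 2

theorem energy_nonneg (l : List α) : 0 ≤ energy A l :=
  sum_nonneg fun _ _ => sq_nonneg _

variable {A}

theorem energy_le_length_sq {l : List α} (hA : l.toFinset ⊆ A) :
    energy A l ≤ (l.length : ℝ) ^ 2 := by
  have hsum : ∑ a ∈ A, (l.count a : ℝ) = l.length := by
    rw [← sum_subset hA fun a _ ha => by simpa using List.count_eq_zero.2 (by simpa using ha),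
      ← List.sum_toFinset_count_eq_length]
    push_cast; rfl
  rw [← hsum]
  exact sum_sq_le_sq_sum_of_nonneg fun _ _ => Nat.cast_nonneg _

theorem energy_append_add_sum_sq (u v : List α) :
    energy A (u ++ v) + ∑ a ∈ A, ((u.count a : ℝ) - v.count a) ^ 2 =
      2 * (energy A u + energy A v) := by
  simp only [energy, List.count_append, Nat.cast_add, mul_add, ← sum_add_distrib, mul_sum]
  exact sum_congr rfl fun _ _ => by ring

theorem mul_energy_add_sq_le {l : List α} (hA : l.toFinset ⊆ A) {k : ℕ} (hk : A.card ≤ k)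
    {m : ℕ} {c : ℝ} (hc₀ : 0 ≤ c) (hc : c ≤ tau m l) :
    k * energy A l + c ^ 2 ≤ 2 * k * (energy A (l.take m) + energy A (l.drop m)) := by
  set d : α → ℝ := fun a => ((l.take m).count a : ℝ) - (l.drop m).count a
  have hcs : c ^ 2 ≤ k * ∑ a ∈ A, d a ^ 2 :=
    calc c ^ 2 ≤ (∑ a ∈ A, |d a|) ^ 2 := by
          rw [← tau_eq_sum_abs_sub hA]; gcongr
      _ ≤ A.card * ∑ a ∈ A, |d a| ^ 2 := sq_sum_le_card_mul_sum_sq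
      _ ≤ k * ∑ a ∈ A, d a ^ 2 := by
          simp only [sq_abs]; gcongr
  have hsplit := energy_append_add_sum_sq (A := A) (l.take m) (l.drop m)
  rw [List.take_append_drop] at hsplit
  have hk₀ : (0 : ℝ) ≤ k := Nat.cast_nonneg k
  nlinarith

end Energy

section Dyadic

variable [DecidableEq α] {s : List α} {k r : ℕ} {ε : ℝ}

theorem mul_energy_le_of_forall_le_tau (hk : s.toFinset.card ≤ k) (hε : 0 ≤ ε)
    (hbad : ∀ w, w <:+: s → ∀ m, r ≤ m → w.length = 2 * m → ε * m ≤ tau m w) (t : ℕ) :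
    ∀ w, w <:+: s → w.length = 2 ^ t * r →
      k * energy s.toFinset w ≤ (w.length : ℝ) ^ 2 * (k - t * ε ^ 2 / 4) := by
  have hsub : ∀ {w : List α}, w <:+: s → w.toFinset ⊆ s.toFinset := fun hw _ ha =>
    List.mem_toFinset.2 (hw.subset (List.mem_toFinset.1 ha))
  induction t with
  | zero =>
    intro w hw _
    simpa [mul_comm] using
      mul_le_mul_of_nonneg_left (energy_le_length_sq (hsub hw)) (Nat.cast_nonneg k)
  | succ t ih =>
    intro w hw hlen
    set L := 2 ^ t * r
    have hhalf : w.length = 2 * L := by rw [hlen, pow_succ]; ring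
    have hLu : (w.take L).length = L := by simp [hhalf]; omega
    have hLv : (w.drop L).length = L := by simp [hhalf]; omega
    have hu := ih _ (w.take_prefix L |>.isInfix.trans hw) hLu
    have hv := ih _ (w.drop_suffix L |>.isInfix.trans hw) hLv
    have hsplit := mul_energy_add_sq_le (hsub hw) hk (by positivity)
      (hbad w hw L (Nat.le_mul_of_pos_left r (by positivity)) hhalf)
    rw [hLu] at hu
    rw [hLv] at hv
    rw [hhalf]
    push_cast
    linarith

theorem exists_isInfix_tau_lt {T : ℕ} (hk : s.toFinset.card ≤ k) (hε : 0 ≤ ε) (hr : 0 < r)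
    (hT : 4 * (k : ℝ) < T * ε ^ 2) (hs : s.length = 2 ^ T * r) :
    ∃ w, w <:+: s ∧ ∃ m, r ≤ m ∧ w.length = 2 * m ∧ (tau m w : ℝ) < ε * m := by
  by_contra! hbad
  have hle := mul_energy_le_of_forall_le_tau hk hε hbad T s (List.infix_refl s) hs
  have hpos : (0 : ℝ) < (s.length : ℝ) ^ 2 := by rw [hs]; positivity
  have hE := mul_nonneg (Nat.cast_nonneg k) (energy_nonneg s.toFinset s)
  nlinarith

end Dyadic

end

theorem exists_near_anagramish_substring_general (r₀ ℓ : ℕ) (ε : ℝ) (hε : 0 < ε) :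
    ∃ n : ℕ, 0 < n ∧ ∀ (α : Type*) (s : List α), s.length = n → LPeriodic ℓ s →
      ∃ i r : ℕ, r₀ ≤ r ∧ i + 2 * r ≤ s.length ∧
        (tau r ((s.drop i).take (2 * r)) : ℝ) ≤ ε * r := by
  obtain ⟨T, hT⟩ := exists_nat_gt (4 * ℓ / ε ^ 2)
  rw [div_lt_iff₀ (by positivity)] at hT
  set r := r₀ + ℓ + 1
  refine ⟨2 ^ T * r, by positivity, fun α s hs hper => ?_⟩
  classical
  have hℓ : ℓ ≤ s.length := hs ▸ (Nat.le_mul_of_pos_left r (by positivity)).trans' (by omega)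
  have hk := hper.card_toFinset_le hℓ
  obtain ⟨w, hw, m, hrm, hlen, hτ⟩ := exists_isInfix_tau_lt hk hε.le (by omega) hT hs
  obtain ⟨i, hi, hwin⟩ := hw.exists_eq_take_drop
  refine ⟨i, m, by omega, hlen ▸ hi, ?_⟩
  rw [← hlen, hwin]
  exact hτ.le

/-- For each `r₀, ℓ ≥ 1` and `ε > 0` there is a positive `n` such that every
`ℓ`-periodic string of length `n` contains a contiguous substring of even length
`2r` with `r ≥ r₀` and `τ ≤ ε r`. -/
theorem exists_near_anagramish_substring (r₀ ℓ : ℕ) (hℓ : 1 ≤ ℓ) (ε : ℝ) (hε : 0 < ε) :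
    ∃ n : ℕ, 0 < n ∧ ∀ (α : Type*) (s : List α), s.length = n → LPeriodic ℓ s →
      ∃ i r : ℕ, r₀ ≤ r ∧ i + 2 * r ≤ s.length ∧
        (tau r ((s.drop i).take (2 * r)) : ℝ) ≤ ε * r :=
  exists_near_anagramish_substring_general r₀ ℓ ε hε
end

section
/- Let Σ be a finite nonempty alphabet and let P be a function from finite strings over Σ to {0,1} such that: (A1) if P(s') = 0 for some contiguous substring s' of s, then P(s) = 0; and (A2) for each n ∈ ℕ there exists at least one string s over Σ of length n with P(s) = 1. Then there exist ℓ ∈ ℕ and a subset Ξ ⊆ Σ such that, for each n ∈ ℕ: (C1) there exists a string s of length n with all characters in Ξ and P(s) = 1; and (C2) every string s of length n with all characters in Ξ and P(s) = 1 is ℓ-periodic. -/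
open Filter

section

variable {α : Type*} (P : List α → Bool)

def RealizesAllLengths (Ξ : Set α) : Prop :=
  ∀ n : ℕ, ∃ s : List α, s.length = n ∧ (∀ a ∈ s, a ∈ Ξ) ∧ P s = true

def ForbiddenAt (S : Set α) (m : ℕ) : Prop :=
  ∀ s : List α, s.length = m → (∀ a ∈ s, a ∈ S) → P s = false

variable {P}

theorem forbiddenAt_mono (hP : ∀ s s' : List α, s' <:+: s → P s' = false → P s = false)
    {S : Set α} {m m' : ℕ} (h : ForbiddenAt P S m) (hm : m ≤ m') : ForbiddenAt P S m' := by
  intro s hs hsS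
  refine hP s (s.take m) (s.take_prefix m).isInfix
    (h _ ?_ fun a ha => hsS a (List.mem_of_mem_take ha))
  simp [hs, hm]

theorem eventually_forbiddenAt_diff_singleton
    (hP : ∀ s s' : List α, s' <:+: s → P s' = false → P s = false)
    {Ξ : Set α} (hΞ : Minimal (RealizesAllLengths P) Ξ) {a : α} (ha : a ∈ Ξ) :
    ∀ᶠ m in atTop, ForbiddenAt P (Ξ \ {a}) m := by
  have hnot : ¬ RealizesAllLengths P (Ξ \ {a}) :=
    hΞ.not_prop_of_lt (Set.sdiff_singleton_ssubset.mpr ha)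
  simp only [RealizesAllLengths, not_forall, not_exists, not_and, Bool.not_eq_true] at hnot
  obtain ⟨m, hm⟩ := hnot
  exact eventually_atTop.mpr ⟨m, fun _ => forbiddenAt_mono hP hm⟩

theorem lPeriodic_of_forbiddenAt
    (hP : ∀ s s' : List α, s' <:+: s → P s' = false → P s = false)
    {Ξ : Set α} {ℓ : ℕ} (hℓ : ∀ a ∈ Ξ, ForbiddenAt P (Ξ \ {a}) ℓ)
    {s : List α} (hsΞ : ∀ a ∈ s, a ∈ Ξ) (hs : P s = true) : LPeriodic ℓ s := by
  intro i hi a ha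
  by_contra haw
  set w := (s.drop i).take ℓ
  have hws : w <:+: s := ((s.drop i).take_prefix ℓ).isInfix.trans (s.drop_suffix i).isInfix
  have hwℓ : w.length = ℓ := by simp [w]; omega
  have hwΞ : ∀ b ∈ w, b ∈ Ξ \ {a} := fun b hb =>
    ⟨hsΞ b (hws.subset hb), fun hba => haw (hba ▸ hb)⟩
  simpa [hs] using hP s w hws (hℓ a (hsΞ a ha) w hwℓ hwΞ)

end

theorem periodicity_lemma_general {α : Type*} [Fintype α] (P : List α → Bool)
    (hA1 : ∀ s s' : List α, s' <:+: s → P s' = false → P s = false)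
    (hA2 : ∀ n : ℕ, ∃ s : List α, s.length = n ∧ P s = true) :
    ∃ (ℓ : ℕ) (Ξ : Set α), ∀ n : ℕ,
      (∃ s : List α, s.length = n ∧ (∀ a ∈ s, a ∈ Ξ) ∧ P s = true) ∧
      (∀ s : List α, s.length = n → (∀ a ∈ s, a ∈ Ξ) → P s = true → LPeriodic ℓ s) := by
  have huniv : RealizesAllLengths P Set.univ := fun n =>
    (hA2 n).imp fun s ⟨hs, hPs⟩ => ⟨hs, fun a _ => Set.mem_univ a, hPs⟩
  obtain ⟨Ξ, -, hΞ⟩ := exists_minimal_le_of_wellFoundedLT _ _ huniv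
  have hforbidden : ∀ᶠ m in atTop, ∀ a : Ξ, ForbiddenAt P (Ξ \ {a.1}) m :=
    eventually_all.mpr fun a => eventually_forbiddenAt_diff_singleton hA1 hΞ a.2
  obtain ⟨ℓ, hℓ⟩ := hforbidden.exists
  exact ⟨ℓ, Ξ, fun n => ⟨hΞ.prop n, fun s _ hsΞ hs =>
    lPeriodic_of_forbiddenAt hA1 (fun a ha => hℓ ⟨a, ha⟩) hsΞ hs⟩⟩

/-- Given a `{0,1}`-valued predicate `P` on strings over a finite nonempty alphabet
such that (A1) `P s = 0` whenever `P s' = 0` for some contiguous substring `s'` of `s`,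
and (A2) for each `n` there is a string of length `n` with `P s = 1`, there exist
`ℓ ∈ ℕ` and `Ξ ⊆ Σ` such that for each `n`: (C1) some string of length `n` over `Ξ`
has `P s = 1`; and (C2) every string of length `n` over `Ξ` with `P s = 1` is
`ℓ`-periodic. -/
theorem periodicity_lemma {α : Type*} [Fintype α] [Nonempty α] (P : List α → Bool)
    (hA1 : ∀ s s' : List α, s' <:+: s → P s' = false → P s = false)
    (hA2 : ∀ n : ℕ, ∃ s : List α, s.length = n ∧ P s = true) :
    ∃ (ℓ : ℕ) (Ξ : Set α), ∀ n : ℕ,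
      (∃ s : List α, s.length = n ∧ (∀ a ∈ s, a ∈ Ξ) ∧ P s = true) ∧
      (∀ s : List α, s.length = n → (∀ a ∈ s, a ∈ Ξ) → P s = true → LPeriodic ℓ s) :=
  periodicity_lemma_general P hA1 hA2
end

section
/- Suppose that for each n ∈ ℕ the 2×n grid G_n admits an anagram-free vertex c-colouring. Then there exist ℓ ∈ ℕ and a vertex c-colouring φ* of G_4 such that, for each k ∈ ℕ, there exists an ℓ-periodic string s ∈ (Σ_{c,ℓ})^k for which φ_s is an anagram-free vertex c-colouring of G_{n_s}. -/
/-!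
Cut colourings of the infinite `2 × ℕ` grid into letters of eight columns, so that distinct
occurrences of a letter are a positive multiple of eight columns apart. Restricting the
anagram-free colourings of the grids `G_n` and using compactness of the space of letter
sequences, the sequences whose column colouring is anagram-free form a nonempty closed
shift-invariant set; a point `U` of a minimal subsystem of it is uniformly recurrent.
Take `φ*` to be the first four columns of the letter `U 0` and cut `U` at the occurrences of
this letter: every piece is a copy of `φ*` followed by a colourful block, and the first `k`
pieces colour a prefix of `U`, hence anagram-freely. The gaps between occurrences are bounded
by some `R`, a piece is determined by the `R + 1` letters starting at its occurrence, and by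
uniform recurrence every such word appears in every window of `L` letters; this bounds both
the symbol sizes and the period.
-/

def IsAnagramish {α : Type*} (l : List α) : Prop :=
  ∃ r : ℕ, 0 < r ∧ l.length = 2 * r ∧ (l.take r).Perm (l.drop r)

def AnagramFree {V : Type*} {c : ℕ} (G : SimpleGraph V) (φ : V → Fin c) : Prop :=
  ∀ l : List V, l.Chain' G.Adj → l.Nodup → ¬ IsAnagramish (l.map φ)

def grid (m n : ℕ) : SimpleGraph (Fin m × Fin n) :=
  (SimpleGraph.pathGraph m).boxProd (SimpleGraph.pathGraph n)

def SymAlpha (c ℓ : ℕ) : Type :=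
  Σ k : Fin ℓ, (Fin 2 × Fin (4 * (k.val + 1)) → Fin c)

def boringCols {c : ℕ} (φstar : Fin 2 × Fin 4 → Fin c) : List (Fin 2 → Fin c) :=
  (List.finRange 4).map (fun j i => φstar (i, j))

def colourfulCols {c ℓ : ℕ} (a : SymAlpha c ℓ) : List (Fin 2 → Fin c) :=
  (List.finRange (4 * (a.1.val + 1))).map (fun j i => a.2 (i, j))

def colsOf {c ℓ : ℕ} (φstar : Fin 2 × Fin 4 → Fin c) (s : List (SymAlpha c ℓ)) :
    List (Fin 2 → Fin c) :=
  (s.map (fun a => boringCols φstar ++ colourfulCols a)).flatten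

def phiOfSym {c ℓ : ℕ} (φstar : Fin 2 × Fin 4 → Fin c) (s : List (SymAlpha c ℓ)) :
    Fin 2 × Fin (colsOf φstar s).length → Fin c :=
  fun v => (colsOf φstar s).get ⟨v.2.val, v.2.isLt⟩ v.1

theorem AnagramFree.comp {V W : Type*} {c : ℕ} {G : SimpleGraph V} {H : SimpleGraph W}
    {φ : W → Fin c} (hφ : AnagramFree H φ) (f : G →g H) (hf : Function.Injective f) :
    AnagramFree G (φ ∘ f) := by
  intro l hl hnd hana
  refine hφ (l.map f) ?_ (hnd.map hf) (by rwa [List.map_map])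
  exact List.isChain_map_of_isChain f (fun _ _ => f.map_adj) hl

def gridShift (r : ℕ) {m n : ℕ} (a : ℕ) (h : a + m ≤ n) : grid r m →g grid r n where
  toFun v := (v.1, Fin.castLE h (Fin.natAdd a v.2))
  map_rel' {v w} hvw := by
    simp only [grid, SimpleGraph.boxProd_adj, SimpleGraph.pathGraph_adj, Fin.ext_iff,
      Fin.val_castLE, Fin.val_natAdd] at hvw ⊢
    omega

theorem gridShift_injective (r : ℕ) {m n : ℕ} (a : ℕ) (h : a + m ≤ n) :
    Function.Injective (gridShift r a h) := by
  intro v w hvw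
  simp only [gridShift, RelHom.coeFn_mk, Prod.ext_iff, Fin.ext_iff, Fin.val_castLE,
    Fin.val_natAdd, add_right_inj] at hvw
  exact Prod.ext (Fin.ext hvw.1) (Fin.ext hvw.2)

section Columns

variable {r c : ℕ}

def columnColouring (col : ℕ → Fin r → Fin c) (n : ℕ) : Fin r × Fin n → Fin c :=
  fun v => col v.2 v.1

theorem AnagramFree.columnColouring_shift {col : ℕ → Fin r → Fin c} {a m n : ℕ}
    (h : AnagramFree (grid r n) (columnColouring col n)) (hmn : a + m ≤ n) :
    AnagramFree (grid r m) (columnColouring (fun j => col (a + j)) m) :=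
  h.comp (gridShift r a hmn) (gridShift_injective r a hmn)

def AnagramFreeColumns (col : ℕ → Fin r → Fin c) : Prop :=
  ∀ n, AnagramFree (grid r n) (columnColouring col n)

theorem AnagramFreeColumns.shift {col : ℕ → Fin r → Fin c} (h : AnagramFreeColumns col)
    (a : ℕ) : AnagramFreeColumns (fun j => col (a + j)) :=
  fun n => (h (a + n)).columnColouring_shift le_rfl

end Columns

section Blocks

variable {b : ℕ} [NeZero b] {β : Type*}

def unblock (x : ℕ → Fin b → β) : ℕ → β :=
  fun j => x (j / b) (Fin.ofNat b j)

theorem unblock_mul_add (x : ℕ → Fin b → β) (t j : ℕ) :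
    unblock x (t * b + j) = unblock (fun s => x (t + s)) j := by
  simp only [unblock, Nat.add_comm (t * b), Nat.add_mul_div_right _ _ (NeZero.pos b),
    Nat.add_comm t]
  congr 1
  exact Fin.ext (by simp)

theorem unblock_mul_add_congr {x x' : ℕ → Fin b → β} {s s' y : ℕ}
    (h : x (s + y / b) = x' (s' + y / b)) :
    unblock x (s * b + y) = unblock x' (s' * b + y) := by
  rw [unblock_mul_add, unblock_mul_add]
  exact congrFun h _

theorem unblock_block (col : ℕ → β) : unblock (fun t (j : Fin b) => col (t * b + j)) = col :=
  funext fun j => congrArg col (by simp [Nat.div_add_mod'])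

end Blocks

section Compactness

variable {b r c : ℕ} [NeZero b]

theorem isClosed_setOf_anagramFree_columnColouring_unblock (n : ℕ) :
    IsClosed {x : ℕ → Fin b → Fin r → Fin c |
      AnagramFree (grid r n) (columnColouring (unblock x) n)} := by
  have hcont : Continuous fun x : ℕ → Fin b → Fin r → Fin c =>
      columnColouring (unblock x) n := by
    unfold columnColouring unblock
    fun_prop
  exact (isClosed_discrete {φ | AnagramFree (grid r n) φ}).preimage hcont

theorem isClosed_setOf_anagramFreeColumns_unblock :
    IsClosed {x : ℕ → Fin b → Fin r → Fin c | AnagramFreeColumns (unblock x)} := by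
  simp only [AnagramFreeColumns, Set.ofPred_forall]
  exact isClosed_iInter isClosed_setOf_anagramFree_columnColouring_unblock

theorem AnagramFreeColumns.unblock_shift {x : ℕ → Fin b → Fin r → Fin c}
    (h : AnagramFreeColumns (unblock x)) : AnagramFreeColumns (unblock fun t => x (t + 1)) := by
  have hx : unblock (fun t => x (t + 1)) = fun j => unblock x (b + j) := by
    funext j
    simpa only [one_mul, add_comm] using (unblock_mul_add x 1 j).symm
  exact hx ▸ h.shift b

theorem nonempty_setOf_anagramFreeColumns_unblock [NeZero c]
    (h : ∀ n, ∃ φ : Fin r × Fin n → Fin c, AnagramFree (grid r n) φ) :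
    {x : ℕ → Fin b → Fin r → Fin c | AnagramFreeColumns (unblock x)}.Nonempty := by
  simp only [AnagramFreeColumns, Set.ofPred_forall]
  refine IsCompact.nonempty_iInter_of_sequence_nonempty_isCompact_isClosed _
    (fun n x hx => ?_) (fun n => ?_)
    (isClosed_setOf_anagramFree_columnColouring_unblock 0).isCompact
    isClosed_setOf_anagramFree_columnColouring_unblock
  · simpa only [zero_add, Set.mem_ofPred_eq] using
      hx.columnColouring_shift (a := 0) (m := n) (by omega)
  · obtain ⟨φ, hφ⟩ := h n
    let col : ℕ → Fin r → Fin c := fun j i => if hj : j < n then φ (i, ⟨j, hj⟩) else 0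
    refine ⟨fun t (j : Fin b) => col (t * b + j), ?_⟩
    have hcol : columnColouring col n = φ := funext fun v => by simp [columnColouring, col]
    simpa only [Set.mem_ofPred_eq, unblock_block, hcol]

end Compactness

section MinimalSet

variable {X : Type*} [TopologicalSpace X] [CompactSpace X] {T : X → X}

def IsMinimalSet (T : X → X) (M : Set X) : Prop :=
  Minimal (fun N : Set X => N.Nonempty ∧ IsClosed N ∧ Set.MapsTo T N N) M

theorem exists_isMinimalSet_subset {K : Set X} (hne : K.Nonempty) (hK : IsClosed K)
    (hKT : Set.MapsTo T K K) : ∃ M ⊆ K, IsMinimalSet T M := by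
  refine zorn_superset_nonempty _ (fun C hCS hC ⟨N, hN⟩ => ?_) K ⟨hne, hK, hKT⟩
  have : Nonempty C := ⟨⟨N, hN⟩⟩
  refine ⟨⋂₀ C, ⟨?_, isClosed_sInter fun A hA => (hCS hA).2.1, ?_⟩,
    fun A hA => Set.sInter_subset_of_mem hA⟩
  · exact IsCompact.nonempty_sInter_of_directed_nonempty_isCompact_isClosed
      (IsChain.directedOn hC.symm) (fun A hA => (hCS hA).1)
      (fun A hA => (hCS hA).2.1.isCompact) (fun A hA => (hCS hA).2.1)
  · exact fun x hx => Set.mem_sInter.2 fun A hA => (hCS hA).2.2 (Set.mem_sInter.1 hx A hA)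

theorem IsMinimalSet.exists_syndetic_returns (hT : Continuous T) {M : Set X}
    (hM : IsMinimalSet T M) {x : X} (hx : x ∈ M) {V : Set X} (hV : IsOpen V)
    (hxV : ∃ p, T^[p] x ∈ V) : ∃ L, ∀ s, ∃ q, s ≤ q ∧ q ≤ s + L ∧ T^[q] x ∈ V := by
  have hMT : ∀ n, Set.MapsTo T^[n] M M := fun n => hM.prop.2.2.iterate n
  -- the points of `M` whose orbit avoids `V` form a closed invariant subset, hence none
  have hcover : M ⊆ ⋃ q, T^[q] ⁻¹' V := by
    by_contra hsub
    obtain ⟨y, hyM, hy⟩ := Set.not_subset.1 hsub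
    let W := M ∩ ⋂ q, T^[q] ⁻¹' Vᶜ
    have hW : W.Nonempty ∧ IsClosed W ∧ Set.MapsTo T W W := by
      refine ⟨⟨y, hyM, by simpa using hy⟩, hM.prop.2.1.inter (isClosed_iInter fun q =>
        hV.isClosed_compl.preimage (hT.iterate q)), fun z hz => ⟨hM.prop.2.2 hz.1, ?_⟩⟩
      simpa only [Set.mem_iInter, Set.mem_preimage, ← Function.iterate_succ_apply] using
        fun q => Set.mem_iInter.1 hz.2 (q + 1)
    obtain ⟨p, hp⟩ := hxV
    have hpW : T^[p] x ∈ W := hM.eq_of_subset hW Set.inter_subset_left ▸ hMT p hx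
    exact absurd hp (Set.mem_iInter.1 hpW.2 0)
  obtain ⟨Q, hQ⟩ := hM.prop.2.1.isCompact.elim_finite_subcover _
    (fun q => hV.preimage (hT.iterate q)) hcover
  refine ⟨Q.sup id, fun s => ?_⟩
  obtain ⟨q, hqQ, hq⟩ := Set.mem_iUnion₂.1 (hQ (hMT s hx))
  have hqL : q ≤ Q.sup id := Finset.le_sup (f := id) hqQ
  exact ⟨q + s, Nat.le_add_left s q, by omega, by rwa [Function.iterate_add_apply]⟩

end MinimalSet

section UniformlyRecurrent

variable {α : Type*}

def IsUniformlyRecurrent (u : ℕ → α) : Prop :=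
  ∀ m, ∃ L, ∀ p s, ∃ q, s ≤ q ∧ q ≤ s + L ∧ ∀ j < m, u (q + j) = u (p + j)

theorem iterate_shift (x : ℕ → α) (q : ℕ) :
    (fun y n => y (n + 1))^[q] x = fun n => x (n + q) := by
  induction q with
  | zero => rfl
  | succ q ih => rw [Function.iterate_succ_apply', ih]; simp only [add_assoc, add_comm 1]

theorem exists_isUniformlyRecurrent_mem [TopologicalSpace α] [DiscreteTopology α] [Finite α]
    {K : Set (ℕ → α)} (hne : K.Nonempty) (hK : IsClosed K)
    (hshift : Set.MapsTo (fun x n => x (n + 1)) K K) : ∃ u ∈ K, IsUniformlyRecurrent u := by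
  set T : (ℕ → α) → ℕ → α := fun x n => x (n + 1)
  have hT : Continuous T := by fun_prop
  obtain ⟨M, hMK, hM⟩ := exists_isMinimalSet_subset hne hK hshift
  obtain ⟨u, hu⟩ := hM.prop.1
  refine ⟨u, hMK hu, fun m => ?_⟩
  -- `w` occurs in `u` at `p` iff `T^[p] u` lies in the open cylinder of `w`
  let cyl (w : Fin m → α) : Set (ℕ → α) := (fun x (j : Fin m) => x j) ⁻¹' {w}
  have hw (w : Fin m → α) : ∃ L, (∃ p, T^[p] u ∈ cyl w) →
      ∀ s, ∃ q, s ≤ q ∧ q ≤ s + L ∧ T^[q] u ∈ cyl w := by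
    by_cases h : ∃ p, T^[p] u ∈ cyl w
    · obtain ⟨L, hL⟩ := hM.exists_syndetic_returns hT hu
        ((isOpen_discrete _).preimage (by fun_prop)) h
      exact ⟨L, fun _ => hL⟩
    · exact ⟨0, fun h' => (h h').elim⟩
  choose Lw hLw using hw
  obtain ⟨L, hL⟩ := (Set.finite_range Lw).bddAbove
  refine ⟨L, fun p s => ?_⟩
  obtain ⟨q, hsq, hqs, hq⟩ :=
    hLw (fun j => u (p + j)) ⟨p, by simp [T, cyl, iterate_shift, add_comm]⟩ s
  have hLp := hL (Set.mem_range_self (fun j : Fin m => u (p + j)))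
  refine ⟨q, hsq, by omega, fun j hj => ?_⟩
  simpa [T, cyl, iterate_shift, add_comm] using congrFun hq ⟨j, hj⟩

end UniformlyRecurrent

section Periodic

variable {β : Type*}

theorem LPeriodic.mono {ℓ ℓ' : ℕ} {s : List β} (h : LPeriodic ℓ s) (hℓ : ℓ ≤ ℓ') :
    LPeriodic ℓ' s :=
  fun i hi a ha => List.take_subset_take_left _ hℓ (h i (by omega) a ha)

theorem lPeriodic_map_range {σ : ℕ → β} {ℓ k : ℕ}
    (h : ∀ i i₀, i < k → i₀ + ℓ ≤ k → ∃ j, i₀ ≤ j ∧ j < i₀ + ℓ ∧ σ j = σ i) :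
    LPeriodic ℓ ((List.range k).map σ) := by
  intro i₀ hi₀ a ha
  simp only [List.length_map, List.length_range] at hi₀
  obtain ⟨i, hi, rfl⟩ := List.mem_map.1 ha
  obtain ⟨j, hij, hj, hσj⟩ := h i i₀ (List.mem_range.1 hi) hi₀
  rw [← hσj, ← List.map_drop, ← List.map_take, List.range_eq_range', List.drop_range',
    List.take_range'_of_length_ge (by omega)]
  exact List.mem_map_of_mem (List.mem_range'_1.2 ⟨by omega, by omega⟩)

end Periodic

section ReturnTime

variable {α : Type*} {u : ℕ → α}

noncomputable def returnTime (u : ℕ → α) : ℕ → ℕ :=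
  Nat.nth fun q => u q = u 0

theorem returnTime_zero : returnTime u 0 = 0 :=
  Nat.nth_zero_of_zero rfl

theorem returnTime_succ_le {i q : ℕ} (h : returnTime u i < q) (hq : u q = u 0) :
    returnTime u (i + 1) ≤ q := by
  by_contra! hlt
  exact (Nat.le_nth_of_lt_nth_succ hlt hq).not_gt h

theorem exists_returnTime_eq {q : ℕ} (hq : u q = u 0) : ∃ i, returnTime u i = q := by
  classical
  exact ⟨_, Nat.nth_count hq⟩

namespace IsUniformlyRecurrent

variable (hu : IsUniformlyRecurrent u)
include hu

theorem infinite_setOf_apply_eq_apply_zero : {q | u q = u 0}.Infinite := by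
  obtain ⟨L, hL⟩ := hu 1
  refine Set.infinite_of_forall_exists_gt fun a => ?_
  obtain ⟨q, hq, -, hq0⟩ := hL 0 (a + 1)
  exact ⟨q, by simpa using hq0 0 one_pos, by omega⟩

theorem returnTime_strictMono : StrictMono (returnTime u) :=
  Nat.nth_strictMono hu.infinite_setOf_apply_eq_apply_zero

theorem apply_returnTime (i : ℕ) : u (returnTime u i) = u 0 :=
  Nat.nth_mem_of_infinite hu.infinite_setOf_apply_eq_apply_zero i

theorem exists_returnTime_succ_le : ∃ R, ∀ i, returnTime u (i + 1) ≤ returnTime u i + R := by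
  obtain ⟨L, hL⟩ := hu 1
  refine ⟨L + 1, fun i => ?_⟩
  obtain ⟨q, hq, hqL, hq0⟩ := hL 0 (returnTime u i + 1)
  have := returnTime_succ_le (u := u) (i := i) (q := q) (by omega) (by simpa using hq0 0 one_pos)
  omega

theorem returnTime_succ_sub_eq {R i j : ℕ}
    (hR : ∀ i, returnTime u (i + 1) ≤ returnTime u i + R)
    (h : ∀ d ≤ R, u (returnTime u i + d) = u (returnTime u j + d)) :
    returnTime u (i + 1) - returnTime u i = returnTime u (j + 1) - returnTime u j := by
  have hlt (n : ℕ) : returnTime u n < returnTime u (n + 1) :=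
    hu.returnTime_strictMono n.lt_succ_self
  have hi := hu.apply_returnTime (i + 1)
  have hj := hu.apply_returnTime (j + 1)
  have hi' := h (returnTime u (i + 1) - returnTime u i) (by have := hR i; omega)
  have hj' := h (returnTime u (j + 1) - returnTime u j) (by have := hR j; omega)
  rw [Nat.add_sub_cancel' (hlt i).le] at hi'
  rw [Nat.add_sub_cancel' (hlt j).le] at hj'
  have hij := returnTime_succ_le (u := u) (i := j) (by have := hlt i; omega) (hi'.symm.trans hi)
  have hji := returnTime_succ_le (u := u) (i := i) (by have := hlt j; omega) (hj'.trans hj)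
  omega

theorem lPeriodic_map_range {β : Type*} {m L : ℕ}
    (hL : ∀ p s, ∃ q, s ≤ q ∧ q ≤ s + L ∧ ∀ j < m + 1, u (q + j) = u (p + j)) (σ : ℕ → β)
    (hσ : ∀ i j, (∀ d ≤ m, u (returnTime u i + d) = u (returnTime u j + d)) → σ i = σ j)
    (k : ℕ) : LPeriodic (L + 1) ((List.range k).map σ) := by
  refine _root_.lPeriodic_map_range fun i i₀ hi hi₀ => ?_
  obtain ⟨q, hq, hqL, hqi⟩ := hL (returnTime u i) (returnTime u i₀)
  obtain ⟨j, rfl⟩ := exists_returnTime_eq (u := u) (q := q)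
    (by simpa [hu.apply_returnTime] using hqi 0 (Nat.succ_pos m))
  have hmono := hu.returnTime_strictMono
  have hi₀j : i₀ ≤ j := hmono.le_iff_le.1 hq
  have hjL : j < i₀ + (L + 1) := hmono.lt_iff_lt.1 <| by
    have : returnTime u i₀ + (L + 1) ≤ returnTime u (i₀ + (L + 1)) := by
      rw [add_comm i₀, add_comm (returnTime u i₀)]
      exact hmono.add_le_nat _ _
    omega
  exact ⟨j, hi₀j, hjL, hσ j i fun d hd => hqi d (by omega)⟩

end IsUniformlyRecurrent

end ReturnTime

section BlockString

variable {c ℓ : ℕ}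

def blockSym (col : ℕ → Fin 2 → Fin c) (a : ℕ) (d : Fin ℓ) : SymAlpha c ℓ :=
  ⟨d, fun v => col (a + v.2) v.1⟩

theorem blockSym_congr {col : ℕ → Fin 2 → Fin c} {a a' : ℕ} {d d' : Fin ℓ} (hd : d = d')
    (h : ∀ y < 4 * ((d : ℕ) + 1), col (a + y) = col (a' + y)) :
    blockSym col a d = blockSym col a' d' := by
  subst hd
  exact congrArg (Sigma.mk d) (funext fun v => congrFun (h v.2 v.2.isLt) v.1)

theorem colourfulCols_blockSym (col : ℕ → Fin 2 → Fin c) (a : ℕ) (d : Fin ℓ) :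
    colourfulCols (blockSym col a d) = (List.range' a (4 * (d + 1))).map col := by
  apply List.ext_getElem <;> simp [colourfulCols, blockSym]

theorem boringCols_columnColouring (col : ℕ → Fin 2 → Fin c) :
    boringCols (columnColouring col 4) = (List.range 4).map col := by
  apply List.ext_getElem <;> simp [boringCols, columnColouring]

theorem colsOf_append (φstar : Fin 2 × Fin 4 → Fin c) (s s' : List (SymAlpha c ℓ)) :
    colsOf φstar (s ++ s') = colsOf φstar s ++ colsOf φstar s' := by
  simp [colsOf]

theorem colsOf_map_blockSym {col : ℕ → Fin 2 → Fin c} {T : ℕ → ℕ} {d : ℕ → Fin ℓ}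
    (h0 : T 0 = 0) (hT : ∀ i, T (i + 1) = T i + 4 * (d i + 2))
    (hboring : ∀ i, ∀ j < 4, col (T i + j) = col j) (k : ℕ) :
    colsOf (columnColouring col 4) ((List.range k).map fun i => blockSym col (T i + 4) (d i)) =
      (List.range (T k)).map col := by
  induction k with
  | zero => simp [colsOf, h0]
  | succ k ih =>
    have hblock : boringCols (columnColouring col 4) ++ colourfulCols (blockSym col (T k + 4) (d k))
        = (List.range' (T k) (4 * (d k + 2))).map col := by
      rw [boringCols_columnColouring, colourfulCols_blockSym,
        List.map_congr_left (l := List.range 4) (g := col ∘ (T k + ·))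
          fun j hj => (hboring k j (List.mem_range.1 hj)).symm,
        ← List.map_map, ← List.range'_eq_map_range, ← List.map_append, List.range'_append_1]
      congr 2
      ring
    rw [List.range_succ, List.map_append, colsOf_append, ih, hT, List.range_eq_range',
      List.range_eq_range', ← List.range'_append_1, List.map_append, zero_add]
    simpa [colsOf] using hblock

theorem phiOfSym_eq_columnColouring {φstar : Fin 2 × Fin 4 → Fin c} {s : List (SymAlpha c ℓ)}
    {col : ℕ → Fin 2 → Fin c} {n : ℕ} (h : colsOf φstar s = (List.range n).map col) :
    phiOfSym φstar s = columnColouring col (colsOf φstar s).length := by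
  funext v
  simp [phiOfSym, columnColouring, List.getElem_of_eq h]

end BlockString

theorem exists_lPeriodic_anagramFree_of_isUniformlyRecurrent {c : ℕ}
    {U : ℕ → Fin 8 → Fin 2 → Fin c} (hU : IsUniformlyRecurrent U)
    (hAF : AnagramFreeColumns (unblock U)) :
    ∃ (ℓ : ℕ) (φstar : Fin 2 × Fin 4 → Fin c), ∀ k : ℕ,
      ∃ s : List (SymAlpha c ℓ), s.length = k ∧ LPeriodic ℓ s ∧
        AnagramFree (grid 2 (colsOf φstar s).length) (phiOfSym φstar s) := by
  obtain ⟨R, hR⟩ := hU.exists_returnTime_succ_le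
  obtain ⟨L, hL⟩ := hU (R + 1)
  have hlt (i : ℕ) : returnTime U i < returnTime U (i + 1) :=
    hU.returnTime_strictMono i.lt_succ_self
  -- the `8Δ = 4 + 4((2Δ - 2) + 1)` columns between consecutive returns of the letter `U 0`
  -- form a boring block followed by a colourful one
  let d (i : ℕ) : Fin (L + 1 + 2 * R) :=
    ⟨2 * (returnTime U (i + 1) - returnTime U i) - 2, by have := hR i; omega⟩
  let σ (i : ℕ) := blockSym (unblock U) (returnTime U i * 8 + 4) (d i)
  have hboring (i : ℕ) : ∀ j < 4, unblock U (returnTime U i * 8 + j) = unblock U j :=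
    fun j hj => by
      simpa using unblock_mul_add_congr (s' := 0) (y := j)
        (by rw [Nat.div_eq_of_lt (by omega), add_zero, hU.apply_returnTime])
  have hcols (k : ℕ) : colsOf (columnColouring (unblock U) 4) ((List.range k).map σ) =
      (List.range (returnTime U k * 8)).map (unblock U) :=
    colsOf_map_blockSym (by simp [returnTime_zero])
      (fun i => by have := hlt i; simp only [d]; omega) hboring k
  refine ⟨L + 1 + 2 * R, columnColouring (unblock U) 4,
    fun k => ⟨(List.range k).map σ, by simp, ?_, ?_⟩⟩
  · refine (hU.lPeriodic_map_range hL σ (fun i j hij => ?_) k).mono (by omega)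
    have hΔ := hU.returnTime_succ_sub_eq hR fun e he => hij e (by omega)
    refine blockSym_congr (Fin.ext (by simp only [d, hΔ])) fun y hy => ?_
    simp only [d] at hy
    rw [add_assoc, add_assoc]
    exact unblock_mul_add_congr (hij _ (by have := hR i; have := hlt i; omega))
  · rw [phiOfSym_eq_columnColouring (hcols k)]
    exact hAF _

/-- If every `2 × n` grid admits an anagram-free vertex `c`-colouring, then there are
`ℓ ∈ ℕ` and a colouring `φ*` of `G₄` such that for each `k` there is an `ℓ`-periodic
string `s ∈ (Σ_{c,ℓ})^k` for which `φ_s` is an anagram-free colouring of `G_{n_s}`. -/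
theorem block_colouring (c : ℕ)
    (h : ∀ n : ℕ, ∃ φ : Fin 2 × Fin n → Fin c, AnagramFree (grid 2 n) φ) :
    ∃ (ℓ : ℕ) (φstar : Fin 2 × Fin 4 → Fin c), ∀ k : ℕ,
      ∃ s : List (SymAlpha c ℓ), s.length = k ∧ LPeriodic ℓ s ∧
        AnagramFree (grid 2 (colsOf φstar s).length) (phiOfSym φstar s) := by
  have : NeZero c := ⟨by rintro rfl; exact (h 1).elim fun φ _ => (φ (0, 0)).elim0⟩
  obtain ⟨U, hAF, hU⟩ := exists_isUniformlyRecurrent_mem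
    (nonempty_setOf_anagramFreeColumns_unblock (b := 8) h)
    isClosed_setOf_anagramFreeColumns_unblock fun x hx => hx.unblock_shift
  exact exists_lPeriodic_anagramFree_of_isUniformlyRecurrent hU hAF
end
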